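/- Every disjoint covering of a dyadic rectangle T of area at least 2 by tiles is either a union of a disjoint covering of the left half L and a disjoint covering of the right half R, or a union of a disjoint covering of the lower half D and a disjoint covering of the upper half U. -/
import Mathlib

/-- A dyadic rectangle `[2^{-jt} k, 2^{-jt}(k+1)) × [2^{jf} l, 2^{jf}(l+1))`. -/
def dyadicRect (jt : ℕ) (k : ℕ) (jf : ℤ) (l : ℕ) : Set (ℝ × ℝ) :=
  Set.Ico ((2:ℝ) ^ (-(jt:ℤ)) * k) ((2:ℝ) ^ (-(jt:ℤ)) * (k + 1)) ×ˢ
  Set.Ico ((2:ℝ) ^ jf * l) ((2:ℝ) ^ jf * (l + 1))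

/-- `p` is a tile (dyadic rectangle of area one in `S = [0,1) × [0,∞)`). -/
def IsTile (p : Set (ℝ × ℝ)) : Prop :=
  ∃ j k l : ℕ, k < 2 ^ j ∧ p = dyadicRect j k (j:ℤ) l

/-- `B` is a finite collection of pairwise disjoint tiles contained in `T`
whose union is `T`. -/
def IsDisjointCover (T : Set (ℝ × ℝ)) (B : Finset (Set (ℝ × ℝ))) : Prop :=
  (∀ p ∈ B, IsTile p ∧ p ⊆ T) ∧
  (B : Set (Set (ℝ × ℝ))).PairwiseDisjoint id ∧
  ⋃₀ (B : Set (Set (ℝ × ℝ))) = T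

section Helpers


/-- Dyadic half-open interval `[2^a e, 2^a (e+1))`. -/
def DI (a : ℤ) (e : ℕ) : Set ℝ := Set.Ico ((2:ℝ)^a * e) ((2:ℝ)^a * (e+1))

lemma DI_nonempty (a : ℤ) (e : ℕ) : (DI a e).Nonempty := by
  refine Set.nonempty_Ico.mpr ?_
  have h : (0:ℝ) < 2^a := by positivity
  nlinarith

lemma DI_subset_iff {a b : ℤ} {e f : ℕ} :
    DI a e ⊆ DI b f ↔ ((2:ℝ)^b * f ≤ 2^a * e ∧ (2:ℝ)^a * (e+1) ≤ 2^b * (f+1)) := by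
  unfold DI
  rw [Set.Ico_subset_Ico_iff]
  have h : (0:ℝ) < 2^a := by positivity
  nlinarith

lemma DI_exp_le {a b : ℤ} {e f : ℕ} (h : DI a e ⊆ DI b f) : a ≤ b := by
  obtain ⟨h1, h2⟩ := DI_subset_iff.mp h
  have h3 : (2:ℝ)^a ≤ 2^b := by nlinarith
  exact (zpow_le_zpow_iff_right₀ (by norm_num : (1:ℝ) < 2)).mp h3

lemma DI_eq_of_subset {a : ℤ} {e f : ℕ} (h : DI a e ⊆ DI a f) : DI a e = DI a f := by
  obtain ⟨h1, h2⟩ := DI_subset_iff.mp h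
  have hp : (0:ℝ) < 2^a := by positivity
  have hef : (e:ℝ) = f := by nlinarith
  have : e = f := Nat.cast_injective hef
  rw [this]

lemma DI_half {a b : ℤ} {e f : ℕ} (hab : a + 1 ≤ b) (h : DI a e ⊆ DI b f) :
    DI a e ⊆ DI (b-1) (2*f) ∨ DI a e ⊆ DI (b-1) (2*f+1) := by
  obtain ⟨h1, h2⟩ := DI_subset_iff.mp h
  set n : ℕ := (b - 1 - a).toNat with hn
  have hbn : b - 1 = a + (n:ℤ) := by omega
  have hpow : (2:ℝ)^(b-1) = 2^a * ((2^n : ℕ):ℝ) := by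
    rw [hbn, zpow_add₀ (two_ne_zero), zpow_natCast]; push_cast; ring
  have hb : (2:ℝ)^b = 2^(b-1) * 2 := by
    rw [← zpow_add_one₀ (two_ne_zero) (b-1), sub_add_cancel]
  have hp : (0:ℝ) < 2^(b-1) := by positivity
  have hpa : (0:ℝ) < 2^a := by positivity
  rcases le_or_gt ((2:ℝ)^(b-1)*(2*(f:ℝ)+1)) (2^a*e) with hc | hc
  · right
    refine DI_subset_iff.mpr ⟨?_, ?_⟩
    · push_cast; linarith
    · push_cast; nlinarith
  · left
    push_cast at hpow
    have heN : e < 2^n * (2*f+1) := by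
      have h5 : (2:ℝ)^a * e < 2^a * (2^n * (2*(f:ℝ)+1)) := by nlinarith [hc, hpow]
      have h6 : (e:ℝ) < 2^n * (2*(f:ℝ)+1) := (mul_lt_mul_iff_right₀ hpa).mp h5
      have h7 : (e:ℝ) < ((2^n * (2*f+1) : ℕ):ℝ) := by push_cast; linarith
      exact_mod_cast h7
    have heN' : (e:ℝ) + 1 ≤ 2^n * (2*(f:ℝ)+1) := by
      have : (e:ℝ) + 1 ≤ ((2^n * (2*f+1) : ℕ):ℝ) := by exact_mod_cast heN
      push_cast at this; linarith
    refine DI_subset_iff.mpr ⟨?_, ?_⟩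
    · push_cast; nlinarith
    · push_cast
      nlinarith [mul_le_mul_of_nonneg_left heN' hpa.le, hpow]

lemma DI_half_subset {b : ℤ} {f : ℕ} (i : ℕ) (hi : i ≤ 1) : DI (b-1) (2*f+i) ⊆ DI b f := by
  have hb : (2:ℝ)^b = 2^(b-1) * 2 := by
    rw [← zpow_add_one₀ (two_ne_zero) (b-1), sub_add_cancel]
  have hp : (0:ℝ) < 2^(b-1) := by positivity
  have hi' : (i:ℝ) ≤ 1 := by exact_mod_cast hi
  refine DI_subset_iff.mpr ⟨?_, ?_⟩
  · push_cast; nlinarith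
  · push_cast; nlinarith

lemma DI_consec_disjoint (a : ℤ) (e : ℕ) : Disjoint (DI a e) (DI a (e+1)) := by
  have h : ((e+1:ℕ):ℝ) = (e:ℝ)+1 := by push_cast; ring
  unfold DI
  rw [h]
  exact Set.Ico_disjoint_Ico_same

lemma DI_half_subset_left {b : ℤ} {f : ℕ} : DI (b-1) (2*f) ⊆ DI b f := by
  have hb : (2:ℝ)^b = 2^(b-1) * 2 := by
    rw [← zpow_add_one₀ (two_ne_zero) (b-1), sub_add_cancel]
  have hp : (0:ℝ) < 2^(b-1) := by positivity
  refine DI_subset_iff.mpr ⟨?_, ?_⟩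
  · push_cast; nlinarith
  · push_cast; nlinarith

lemma DI_half_subset_right {b : ℤ} {f : ℕ} : DI (b-1) (2*f+1) ⊆ DI b f := by
  have hb : (2:ℝ)^b = 2^(b-1) * 2 := by
    rw [← zpow_add_one₀ (two_ne_zero) (b-1), sub_add_cancel]
  have hp : (0:ℝ) < 2^(b-1) := by positivity
  refine DI_subset_iff.mpr ⟨?_, ?_⟩
  · push_cast; nlinarith
  · push_cast; nlinarith

lemma prod_disjoint_fst {s₁ s₂ t₁ t₂ : Set ℝ} (h : Disjoint s₁ s₂) :
    Disjoint (s₁ ×ˢ t₁) (s₂ ×ˢ t₂) := by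
  rw [Set.disjoint_left] at h ⊢
  rintro ⟨x, y⟩ ⟨h1, _⟩ ⟨h2, _⟩
  exact h h1 h2

lemma prod_disjoint_snd {s₁ s₂ t₁ t₂ : Set ℝ} (h : Disjoint t₁ t₂) :
    Disjoint (s₁ ×ˢ t₁) (s₂ ×ˢ t₂) := by
  rw [Set.disjoint_left] at h ⊢
  rintro ⟨x, y⟩ ⟨_, h1⟩ ⟨_, h2⟩
  exact h h1 h2

lemma prod_sub {a c b d : ℤ} {e g f h' : ℕ}
    (H : DI a e ×ˢ DI c g ⊆ DI b f ×ˢ DI d h') :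
    DI a e ⊆ DI b f ∧ DI c g ⊆ DI d h' := by
  rcases Set.prod_subset_prod_iff.mp H with h | h | h
  · exact h
  · exact absurd h (DI_nonempty a e).ne_empty
  · exact absurd h (DI_nonempty c g).ne_empty


lemma dyadicRect_def (jt k : ℕ) (jf : ℤ) (l : ℕ) :
    dyadicRect jt k jf l = DI (-(jt:ℤ)) k ×ˢ DI jf l := rfl

lemma build_cover {T L R : Set (ℝ × ℝ)} {B : Finset (Set (ℝ × ℝ))}
    (hB : IsDisjointCover T B) (hLR : ∀ p ∈ B, p ⊆ L ∨ p ⊆ R)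
    (hd : Disjoint L R) (hLT : L ⊆ T) (hRT : R ⊆ T) :
    ∃ B₁ B₂ : Finset (Set (ℝ × ℝ)), IsDisjointCover L B₁ ∧ IsDisjointCover R B₂ ∧
      (B : Set (Set (ℝ × ℝ))) = (B₁ : Set (Set (ℝ × ℝ))) ∪ (B₂ : Set (Set (ℝ × ℝ))) := by
  classical
  obtain ⟨hmem, hdisj, hcover⟩ := hB
  refine ⟨B.filter (fun p => p ⊆ L), B.filter (fun p => ¬ p ⊆ L), ⟨?_, ?_, ?_⟩, ⟨?_, ?_, ?_⟩, ?_⟩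
  · intro p hp
    rw [Finset.mem_filter] at hp
    exact ⟨(hmem p hp.1).1, hp.2⟩
  · exact hdisj.subset (Finset.coe_subset.mpr (Finset.filter_subset _ _))
  · apply subset_antisymm
    · rintro x ⟨p, hp, hxp⟩
      rw [Finset.mem_coe, Finset.mem_filter] at hp
      exact hp.2 hxp
    · intro x hx
      have hxT : x ∈ ⋃₀ (B : Set (Set (ℝ × ℝ))) := by rw [hcover]; exact hLT hx
      obtain ⟨p, hp, hxp⟩ := hxT
      rw [Finset.mem_coe] at hp
      have hpL : p ⊆ L := by
        rcases hLR p hp with h | h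
        · exact h
        · exact absurd hx (Set.disjoint_right.mp hd (h hxp))
      exact ⟨p, by rw [Finset.mem_coe, Finset.mem_filter]; exact ⟨hp, hpL⟩, hxp⟩
  · intro p hp
    rw [Finset.mem_filter] at hp
    rcases hLR p hp.1 with h | h
    · exact absurd h hp.2
    · exact ⟨(hmem p hp.1).1, h⟩
  · exact hdisj.subset (Finset.coe_subset.mpr (Finset.filter_subset _ _))
  · apply subset_antisymm
    · rintro x ⟨p, hp, hxp⟩
      rw [Finset.mem_coe, Finset.mem_filter] at hp
      rcases hLR p hp.1 with h | h
      · exact absurd h hp.2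
      · exact h hxp
    · intro x hx
      have hxT : x ∈ ⋃₀ (B : Set (Set (ℝ × ℝ))) := by rw [hcover]; exact hRT hx
      obtain ⟨p, hp, hxp⟩ := hxT
      rw [Finset.mem_coe] at hp
      have hpnL : ¬ p ⊆ L := fun h => (Set.disjoint_left.mp hd (h hxp)) hx
      exact ⟨p, by rw [Finset.mem_coe, Finset.mem_filter]; exact ⟨hp, hpnL⟩, hxp⟩
  · rw [← Finset.coe_union, Finset.filter_union_filter_not_eq]

lemma tile_time_full {j k : ℕ} {m : ℤ} {l : ℕ} (j' k' l' : ℕ)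
    (hsub : DI (-(j':ℤ)) k' ×ˢ DI (j':ℤ) l' ⊆ DI (-(j:ℤ)) k ×ˢ DI m l)
    (hn1 : ¬ DI (-(j':ℤ)) k' ×ˢ DI (j':ℤ) l' ⊆ DI (-(j:ℤ)-1) (2*k) ×ˢ DI m l)
    (hn2 : ¬ DI (-(j':ℤ)) k' ×ˢ DI (j':ℤ) l' ⊆ DI (-(j:ℤ)-1) (2*k+1) ×ˢ DI m l) :
    (j':ℤ) = j ∧ DI (-(j':ℤ)) k' = DI (-(j:ℤ)) k := by
  obtain ⟨ht, hf⟩ := prod_sub hsub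
  have hle : -(j':ℤ) ≤ -(j:ℤ) := DI_exp_le ht
  by_cases hcase : (-(j':ℤ)) + 1 ≤ -(j:ℤ)
  · rcases DI_half hcase ht with h | h
    · exact absurd (Set.prod_mono h hf) hn1
    · exact absurd (Set.prod_mono h hf) hn2
  · have hj : (j':ℤ) = j := by omega
    refine ⟨hj, ?_⟩
    rw [hj] at ht ⊢
    exact DI_eq_of_subset ht

lemma tile_freq_full {j k : ℕ} {m : ℤ} {l : ℕ} (j' k' l' : ℕ)
    (hsub : DI (-(j':ℤ)) k' ×ˢ DI (j':ℤ) l' ⊆ DI (-(j:ℤ)) k ×ˢ DI m l)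
    (hn1 : ¬ DI (-(j':ℤ)) k' ×ˢ DI (j':ℤ) l' ⊆ DI (-(j:ℤ)) k ×ˢ DI (m-1) (2*l))
    (hn2 : ¬ DI (-(j':ℤ)) k' ×ˢ DI (j':ℤ) l' ⊆ DI (-(j:ℤ)) k ×ˢ DI (m-1) (2*l+1)) :
    (j':ℤ) = m ∧ DI (j':ℤ) l' = DI m l := by
  obtain ⟨ht, hf⟩ := prod_sub hsub
  have hle : (j':ℤ) ≤ m := DI_exp_le hf
  by_cases hcase : (j':ℤ) + 1 ≤ m
  · rcases DI_half hcase hf with h | h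
    · exact absurd (Set.prod_mono ht h) hn1
    · exact absurd (Set.prod_mono ht h) hn2
  · have hj : (j':ℤ) = m := by omega
    refine ⟨hj, ?_⟩
    rw [hj] at hf ⊢
    exact DI_eq_of_subset hf

end Helpers

/-- every disjoint covering of a dyadic rectangle `T` of area ≥ 2
by tiles is either a union of a disjoint covering of the left half `L` and one
of the right half `R`, or a union of a disjoint covering of the lower half `D`
and one of the upper half `U`. -/
theorem cover_splits (j k : ℕ) (m : ℤ) (l : ℕ)
    (hk : k < 2 ^ j) (harea : (j:ℤ) + 1 ≤ m)
    (B : Finset (Set (ℝ × ℝ))) (hB : IsDisjointCover (dyadicRect j k m l) B) :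
    (∃ B₁ B₂ : Finset (Set (ℝ × ℝ)),
       IsDisjointCover (dyadicRect (j+1) (2*k) m l) B₁ ∧
       IsDisjointCover (dyadicRect (j+1) (2*k+1) m l) B₂ ∧
       (B : Set (Set (ℝ × ℝ))) = (B₁ : Set (Set (ℝ × ℝ))) ∪ (B₂ : Set (Set (ℝ × ℝ)))) ∨
    (∃ B₁ B₂ : Finset (Set (ℝ × ℝ)),
       IsDisjointCover (dyadicRect j k (m-1) (2*l)) B₁ ∧
       IsDisjointCover (dyadicRect j k (m-1) (2*l+1)) B₂ ∧
       (B : Set (Set (ℝ × ℝ))) = (B₁ : Set (Set (ℝ × ℝ))) ∪ (B₂ : Set (Set (ℝ × ℝ)))) := by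
  classical
  have hcast : (-(((j+1):ℕ)):ℤ) = -(j:ℤ) - 1 := by push_cast; ring
  have hTdef : dyadicRect j k m l = DI (-(j:ℤ)) k ×ˢ DI m l := dyadicRect_def j k m l
  have hLdef : dyadicRect (j+1) (2*k) m l = DI (-(j:ℤ)-1) (2*k) ×ˢ DI m l := by
    rw [dyadicRect_def, hcast]
  have hRdef : dyadicRect (j+1) (2*k+1) m l = DI (-(j:ℤ)-1) (2*k+1) ×ˢ DI m l := by
    rw [dyadicRect_def, hcast]
  have hDdef : dyadicRect j k (m-1) (2*l) = DI (-(j:ℤ)) k ×ˢ DI (m-1) (2*l) :=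
    dyadicRect_def j k (m-1) (2*l)
  have hUdef : dyadicRect j k (m-1) (2*l+1) = DI (-(j:ℤ)) k ×ˢ DI (m-1) (2*l+1) :=
    dyadicRect_def j k (m-1) (2*l+1)
  by_cases hLR : ∀ p ∈ B, p ⊆ dyadicRect (j+1) (2*k) m l ∨ p ⊆ dyadicRect (j+1) (2*k+1) m l
  · left
    refine build_cover hB hLR ?_ ?_ ?_
    · rw [hLdef, hRdef]; exact prod_disjoint_fst (DI_consec_disjoint _ _)
    · rw [hLdef, hTdef]; exact Set.prod_mono DI_half_subset_left subset_rfl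
    · rw [hRdef, hTdef]; exact Set.prod_mono DI_half_subset_right subset_rfl
  by_cases hDU : ∀ p ∈ B, p ⊆ dyadicRect j k (m-1) (2*l) ∨ p ⊆ dyadicRect j k (m-1) (2*l+1)
  · right
    refine build_cover hB hDU ?_ ?_ ?_
    · rw [hDdef, hUdef]; exact prod_disjoint_snd (DI_consec_disjoint _ _)
    · rw [hDdef, hTdef]; exact Set.prod_mono subset_rfl DI_half_subset_left
    · rw [hUdef, hTdef]; exact Set.prod_mono subset_rfl DI_half_subset_right
  exfalso
  push_neg at hLR hDU
  obtain ⟨p, hpB, hp1, hp2⟩ := hLR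
  obtain ⟨q, hqB, hq1, hq2⟩ := hDU
  obtain ⟨⟨jp, kp, lp, hkp, hpeq⟩, hpT⟩ := hB.1 p hpB
  obtain ⟨⟨jq, kq, lq, hkq, hqeq⟩, hqT⟩ := hB.1 q hqB
  rw [dyadicRect_def] at hpeq hqeq
  rw [hpeq, hTdef] at hpT
  rw [hqeq, hTdef] at hqT
  rw [hpeq, hLdef] at hp1
  rw [hpeq, hRdef] at hp2
  rw [hqeq, hDdef] at hq1
  rw [hqeq, hUdef] at hq2
  obtain ⟨hjp, hteq⟩ := tile_time_full jp kp lp hpT hp1 hp2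
  obtain ⟨hjq, hfeq⟩ := tile_freq_full jq kq lq hqT hq1 hq2
  have hne : p ≠ q := by
    intro h
    rw [hpeq, hqeq] at h
    have h1 : DI (-(jp:ℤ)) kp = DI (-(jq:ℤ)) kq := by
      have := congrArg (fun s => Prod.fst '' s) h
      simpa [Set.fst_image_prod _ (DI_nonempty (jp:ℤ) lp),
        Set.fst_image_prod _ (DI_nonempty (jq:ℤ) lq)] using this
    have h2 : -(jp:ℤ) = -(jq:ℤ) :=
      le_antisymm (DI_exp_le h1.subset) (DI_exp_le h1.symm.subset)
    omega
  have hd : Disjoint p q := hB.2.1 hpB hqB hne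
  obtain ⟨x₀, hx₀⟩ := DI_nonempty (-(jq:ℤ)) kq
  obtain ⟨y₀, hy₀⟩ := DI_nonempty (jp:ℤ) lp
  have hx₀' : x₀ ∈ DI (-(jp:ℤ)) kp := by
    rw [hteq]; exact (prod_sub hqT).1 hx₀
  have hy₀' : y₀ ∈ DI (jq:ℤ) lq := by
    rw [hfeq]; exact (prod_sub hpT).2 hy₀
  have hmp : (x₀, y₀) ∈ p := by rw [hpeq]; exact Set.mk_mem_prod hx₀' hy₀
  have hmq : (x₀, y₀) ∈ q := by rw [hqeq]; exact Set.mk_mem_prod hx₀ hy₀'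
  exact Set.disjoint_left.mp hd hmp hmq
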